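/- Let G̃ be an irreducible nonnegative n×n matrix, S ∈ ℝ_{>0}^m (all entries strictly positive), and suppose ρ(G̃·Diag(S)) = 1. Then the set of nonzero nonnegative solutions I of 0 = AI + P·Diag(S)BI forms a one-dimensional positive ray: every such solution equals k·(-A)^{-1}P·Diag(S)·v for some k > 0, where v ≫ 0 is the (up to positive scaling unique) Perron eigenvector of G̃·Diag(S). -/

import Mathlib

open Matrix

/-- A matrix is Metzler if its off-diagonal entries are nonnegative. -/
def IsMetzler {n : ℕ} (A : Matrix (Fin n) (Fin n) ℝ) : Prop :=
  ∀ i j, i ≠ j → 0 ≤ A i j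

/-- A matrix is Hurwitz if all its (complex) eigenvalues have negative real part. -/
def IsHurwitz {n : ℕ} (A : Matrix (Fin n) (Fin n) ℝ) : Prop :=
  ∀ μ ∈ spectrum ℂ (A.map (algebraMap ℝ ℂ)), μ.re < 0

/-- The spectral radius of a real matrix. -/
noncomputable def specRad {n : ℕ} (M : Matrix (Fin n) (Fin n) ℝ) : ℝ :=
  sSup {r : ℝ | ∃ μ ∈ spectrum ℂ (M.map (algebraMap ℝ ℂ)), r = ‖μ‖}

/-- A square matrix is irreducible if for every nonempty proper subset `s` of indices
there is a nonzero entry from `s` to its complement. -/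
def MatIrreducible {m : ℕ} (M : Matrix (Fin m) (Fin m) ℝ) : Prop :=
  ∀ s : Set (Fin m), s.Nonempty → s ≠ Set.univ → ∃ i ∈ s, ∃ j ∉ s, M i j ≠ 0

/-!
Since `A` is Metzler and Hurwitz, `X = 1 + A / c` is nonnegative with spectrum in the open unit
disc for large `c`, so `(-A)⁻¹ = c⁻¹ (1 - X)⁻¹ = c⁻¹ ∑ Xᵏ` is nonnegative and `M = G̃ Diag(S)` is a
nonnegative irreducible matrix. If `Mz = μz` with `‖μ‖ = ρ(M) = 1`, then `w = |z|` satisfies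
`w ≤ Mw`. Were `Mw ≠ w`, the nonnegative resolvent `(1 - M/2)⁻¹`, which maps nonzero nonnegative
vectors to positive ones, would give `v ≫ 0` with `Mv ≥ (1 + ε) v`; but then `v ≤ 0` by the
Neumann series of `M / (1 + ε)`. So `w` is a positive fixed point, and any nonnegative fixed point
`w'` is a multiple of it: removing the largest multiple of `w` below `w'` leaves a fixed point
with a zero entry, which must vanish. Finally `u = BI` turns a solution `I` into a nonnegative
fixed point of `M`, and `I = (-A)⁻¹ P Diag(S) u`.
-/

open Filter Topology

theorem spectrum.exists_eq_of_mem_algebraMap_add_smul {𝕜 A : Type*} [Field 𝕜] [Ring A]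
    [Algebra 𝕜 A] {a b : 𝕜} (hb : b ≠ 0) {x : A} {ν : 𝕜}
    (hν : ν ∈ spectrum 𝕜 (algebraMap 𝕜 A a + b • x)) : ∃ μ ∈ spectrum 𝕜 x, ν = a + b * μ := by
  refine ⟨b⁻¹ * (ν - a), ?_, by field_simp; ring⟩
  rw [← sub_add_cancel ν a, spectrum.add_mem_add_iff, ← Units.val_mk0 hb, ← Units.smul_def,
    spectrum.unit_smul_eq_smul, Set.mem_smul_set_iff_inv_smul_mem] at hν
  simpa [Units.smul_def] using hν

theorem tendsto_pow_atTop_nhds_zero_of_forall_norm_lt_one {A : Type*} [NormedRing A]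
    [NormedAlgebra ℂ A] [CompleteSpace A] {a : A} (h : ∀ μ ∈ spectrum ℂ a, ‖μ‖ < 1) :
    Tendsto (a ^ ·) atTop (𝓝 0) := by
  cases subsingleton_or_nontrivial A
  · simp [Subsingleton.elim _ (0 : A)]
  have hρ : spectralRadius ℂ a < (1 : NNReal) :=
    spectrum.spectralRadius_lt_of_forall_lt_of_nonempty (spectrum.nonempty a)
      fun μ hμ => by exact_mod_cast h μ hμ
  obtain ⟨r, hρr, hr1⟩ := ENNReal.lt_iff_exists_nnreal_btwn.mp hρ
  have hbound : ∀ᶠ n : ℕ in atTop, ‖a ^ n‖ ≤ r ^ n := by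
    filter_upwards [eventually_ge_atTop 1,
      (spectrum.pow_nnnorm_pow_one_div_tendsto_nhds_spectralRadius a).eventually_lt_const hρr]
      with n hn1 hn
    have hn0 : (0 : ℝ) < n := by exact_mod_cast hn1
    rw [one_div, ENNReal.rpow_inv_lt_iff hn0, ENNReal.rpow_natCast] at hn
    exact_mod_cast hn.le
  exact squeeze_zero_norm' hbound
    (tendsto_pow_atTop_nhds_zero_of_lt_one r.2 (by exact_mod_cast hr1))

theorem exists_smul_le_and_eq_of_pos {ι : Type*} [Fintype ι] [Nonempty ι] {v : ι → ℝ}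
    (hv : ∀ i, 0 < v i) (x : ι → ℝ) : ∃ c : ℝ, ∃ i, c • v ≤ x ∧ x i = c * v i := by
  obtain ⟨i, -, hi⟩ := Finset.univ.exists_min_image (fun i => x i / v i) Finset.univ_nonempty
  refine ⟨x i / v i, i, fun j => ?_, (div_mul_cancel₀ _ (hv i).ne').symm⟩
  simpa [le_div_iff₀ (hv j)] using hi j (Finset.mem_univ j)

theorem Complex.eventually_norm_ofReal_add_lt {μ : ℂ} (hμ : μ.re < 0) :
    ∀ᶠ c : ℝ in atTop, ‖(c : ℂ) + μ‖ < c := by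
  filter_upwards [eventually_gt_atTop 0, eventually_gt_atTop (‖μ‖ ^ 2 / (-2 * μ.re))]
    with c hc0 hc
  rw [div_lt_iff₀ (by linarith), Complex.sq_norm, Complex.normSq_apply] at hc
  refine lt_of_pow_lt_pow_left₀ 2 hc0.le ?_
  rw [Complex.sq_norm, Complex.normSq_apply]
  simp only [Complex.add_re, Complex.ofReal_re, Complex.add_im, Complex.ofReal_im, zero_add]
  nlinarith

namespace Matrix

section Nonneg

variable {ι κ ν : Type*} [Fintype κ]

theorem mul_apply_nonneg {M : Matrix ι κ ℝ} {N : Matrix κ ν ℝ}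
    (hM : ∀ i j, 0 ≤ M i j) (hN : ∀ i j, 0 ≤ N i j) (i : ι) (j : ν) : 0 ≤ (M * N) i j :=
  Finset.sum_nonneg fun l _ => mul_nonneg (hM i l) (hN l j)

theorem mulVec_nonneg {M : Matrix ι κ ℝ} (hM : ∀ i j, 0 ≤ M i j) {v : κ → ℝ} (hv : 0 ≤ v) :
    0 ≤ M *ᵥ v :=
  fun i => Finset.sum_nonneg fun j _ => mul_nonneg (hM i j) (hv j)

theorem mulVec_mono {M : Matrix ι κ ℝ} (hM : ∀ i j, 0 ≤ M i j) {v w : κ → ℝ} (hvw : v ≤ w) :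
    M *ᵥ v ≤ M *ᵥ w := by
  simpa [mulVec_sub] using mulVec_nonneg hM (sub_nonneg.mpr hvw)

theorem norm_map_mulVec_le {M : Matrix ι κ ℝ} (hM : ∀ i j, 0 ≤ M i j) (z : κ → ℂ) (i : ι) :
    ‖(M.map (algebraMap ℝ ℂ) *ᵥ z) i‖ ≤ (M *ᵥ fun j => ‖z j‖) i := by
  refine (norm_sum_le _ _).trans (le_of_eq (Finset.sum_congr rfl fun j _ => ?_))
  simp [Real.norm_of_nonneg (hM i j)]

end Nonneg

variable {ι : Type*} [Fintype ι] [DecidableEq ι]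

theorem ofReal_mem_spectrum_map_iff {M : Matrix ι ι ℝ} {r : ℝ} :
    (r : ℂ) ∈ spectrum ℂ (M.map (algebraMap ℝ ℂ)) ↔ r ∈ spectrum ℝ M := by
  rw [mem_spectrum_iff_isRoot_charpoly, mem_spectrum_iff_isRoot_charpoly, charpoly_map]
  exact Polynomial.isRoot_map_iff (algebraMap ℝ ℂ).injective

theorem exists_eq_of_mem_spectrum_map_algebraMap_add_smul {M : Matrix ι ι ℝ} {a b : ℝ}
    (hb : b ≠ 0) {ν : ℂ}
    (hν : ν ∈ spectrum ℂ ((algebraMap ℝ (Matrix ι ι ℝ) a + b • M).map (algebraMap ℝ ℂ))) :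
    ∃ μ ∈ spectrum ℂ (M.map (algebraMap ℝ ℂ)), ν = a + b * μ := by
  have hmap : (algebraMap ℝ (Matrix ι ι ℝ) a + b • M).map (algebraMap ℝ ℂ) =
      algebraMap ℂ _ (a : ℂ) + (b : ℂ) • M.map (algebraMap ℝ ℂ) := by
    ext i j
    by_cases hij : i = j <;> simp [algebraMap_eq_diagonal, hij]
  rw [hmap] at hν
  exact spectrum.exists_eq_of_mem_algebraMap_add_smul (by exact_mod_cast hb) hν

theorem norm_lt_one_of_mem_spectrum_map_smul {M : Matrix ι ι ℝ}
    (hM : ∀ μ ∈ spectrum ℂ (M.map (algebraMap ℝ ℂ)), ‖μ‖ ≤ 1) {b : ℝ} (hb0 : 0 < b)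
    (hb1 : b < 1) : ∀ ν ∈ spectrum ℂ ((b • M).map (algebraMap ℝ ℂ)), ‖ν‖ < 1 := by
  intro ν hν
  rw [← zero_add (b • M), ← map_zero (algebraMap ℝ (Matrix ι ι ℝ))] at hν
  obtain ⟨μ, hμ, rfl⟩ := exists_eq_of_mem_spectrum_map_algebraMap_add_smul hb0.ne' hν
  calc ‖((0 : ℝ) : ℂ) + b * μ‖ = b * ‖μ‖ := by simp [hb0.le]
    _ ≤ b := mul_le_of_le_one_right hb0.le (hM μ hμ)
    _ < 1 := hb1

theorem tendsto_pow_of_forall_norm_lt_one {X : Matrix ι ι ℝ}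
    (h : ∀ μ ∈ spectrum ℂ (X.map (algebraMap ℝ ℂ)), ‖μ‖ < 1) :
    Tendsto (X ^ ·) atTop (𝓝 0) := by
  let _ := Matrix.linftyOpNormedRing (n := ι) (α := ℂ)
  let _ := Matrix.linftyOpNormedAlgebra (n := ι) (R := ℂ) (α := ℂ)
  have hℂ := ((continuous_id.matrix_map Complex.continuous_re).tendsto 0).comp
    (tendsto_pow_atTop_nhds_zero_of_forall_norm_lt_one h)
  convert hℂ using 1
  · ext k : 1
    rw [Function.comp_apply, id, ← RingHom.mapMatrix_apply, ← map_pow, RingHom.mapMatrix_apply,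
      Matrix.map_map]
    ext
    simp
  · simp

theorem isUnit_one_sub_of_forall_norm_lt_one {X : Matrix ι ι ℝ}
    (h : ∀ μ ∈ spectrum ℂ (X.map (algebraMap ℝ ℂ)), ‖μ‖ < 1) : IsUnit (1 - X) := by
  have h1 : (1 : ℝ) ∉ spectrum ℝ X := fun h1 =>
    (h _ (ofReal_mem_spectrum_map_iff.mpr h1)).ne (by simp)
  simpa [spectrum.mem_iff] using h1

theorem inv_one_sub_nonneg {X : Matrix ι ι ℝ} (hX : ∀ i j, 0 ≤ X i j)
    (h : ∀ μ ∈ spectrum ℂ (X.map (algebraMap ℝ ℂ)), ‖μ‖ < 1) (i j : ι) :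
    0 ≤ (1 - X)⁻¹ i j := by
  have hdet := (isUnit_iff_isUnit_det _).mp (isUnit_one_sub_of_forall_norm_lt_one h)
  have hsum : ∀ K, ∑ k ∈ Finset.range K, X ^ k = (1 - X ^ K) * (1 - X)⁻¹ := fun K => by
    rw [← geom_sum_mul_neg, mul_nonsing_inv_cancel_right _ _ hdet]
  have hlim : Tendsto (fun K => ∑ k ∈ Finset.range K, X ^ k) atTop (𝓝 (1 - X)⁻¹) := by
    simp_rw [hsum]
    simpa using ((tendsto_const_nhds.sub (tendsto_pow_of_forall_norm_lt_one h)).mul_const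
      (1 - X)⁻¹ : Tendsto _ atTop (𝓝 ((1 - 0) * (1 - X)⁻¹)))
  refine ge_of_tendsto' (tendsto_pi_nhds.mp (tendsto_pi_nhds.mp hlim i) j) fun K => ?_
  simpa [sum_apply] using Finset.sum_nonneg fun k _ => pow_apply_nonneg hX k i j

theorem nonpos_of_le_mulVec {X : Matrix ι ι ℝ} (hX : ∀ i j, 0 ≤ X i j)
    (h : ∀ μ ∈ spectrum ℂ (X.map (algebraMap ℝ ℂ)), ‖μ‖ < 1) {v : ι → ℝ} (hv : v ≤ X *ᵥ v) :
    v ≤ 0 := by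
  have hdet := (isUnit_iff_isUnit_det _).mp (isUnit_one_sub_of_forall_norm_lt_one h)
  have hv' : (1 - X) *ᵥ v ≤ 0 := by simpa [sub_mulVec] using hv
  calc v = (1 - X)⁻¹ *ᵥ ((1 - X) *ᵥ v) := by
        rw [mulVec_mulVec, nonsing_inv_mul _ hdet, one_mulVec]
    _ ≤ (1 - X)⁻¹ *ᵥ 0 := mulVec_mono (inv_one_sub_nonneg hX h) hv'
    _ = 0 := mulVec_zero _

theorem eq_zero_of_smul_le_mulVec {M : Matrix ι ι ℝ} (hM : ∀ i j, 0 ≤ M i j)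
    (hσ : ∀ μ ∈ spectrum ℂ (M.map (algebraMap ℝ ℂ)), ‖μ‖ ≤ 1) {t : ℝ} (ht : 1 < t)
    {v : ι → ℝ} (hv : 0 ≤ v) (htv : t • v ≤ M *ᵥ v) : v = 0 := by
  have ht0 : 0 < t := by linarith
  have hX : ∀ i j, 0 ≤ (t⁻¹ • M) i j := fun i j => mul_nonneg (inv_nonneg.2 ht0.le) (hM i j)
  refine le_antisymm (nonpos_of_le_mulVec hX
    (norm_lt_one_of_mem_spectrum_map_smul hσ (inv_pos.2 ht0) (inv_lt_one_of_one_lt₀ ht)) ?_) hv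
  calc v = t⁻¹ • (t • v) := by rw [smul_smul, inv_mul_cancel₀ ht0.ne', one_smul]
    _ ≤ t⁻¹ • (M *ᵥ v) := smul_le_smul_of_nonneg_left htv (inv_nonneg.2 ht0.le)
    _ = (t⁻¹ • M) *ᵥ v := (smul_mulVec _ _ _).symm

theorem eq_inv_neg_mulVec_of_zero_eq_add {A K : Matrix ι ι ℝ} (hA : IsUnit (-A)) {x : ι → ℝ}
    (h : 0 = A *ᵥ x + K *ᵥ x) : x = (-A)⁻¹ *ᵥ (K *ᵥ x) := by
  have hKx : (-A) *ᵥ x = K *ᵥ x := by rw [neg_mulVec, neg_eq_iff_add_eq_zero, h]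
  rw [← hKx, mulVec_mulVec, nonsing_inv_mul _ ((isUnit_iff_isUnit_det _).mp hA), one_mulVec]

end Matrix

theorem IsHurwitz.isUnit_neg {n : ℕ} {A : Matrix (Fin n) (Fin n) ℝ} (hH : IsHurwitz A) :
    IsUnit (-A) := by
  have h0 : (0 : ℝ) ∉ spectrum ℝ A := fun h0 =>
    (hH _ (ofReal_mem_spectrum_map_iff.mpr h0)).false
  simpa [spectrum.mem_iff] using h0

theorem IsHurwitz.eventually_norm_ofReal_add_lt {n : ℕ} {A : Matrix (Fin n) (Fin n) ℝ}
    (hH : IsHurwitz A) :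
    ∀ᶠ c : ℝ in atTop, ∀ μ ∈ spectrum ℂ (A.map (algebraMap ℝ ℂ)), ‖(c : ℂ) + μ‖ < c :=
  (finite_spectrum _).eventually_all.2 fun μ hμ => Complex.eventually_norm_ofReal_add_lt (hH μ hμ)

theorem IsMetzler.inv_neg_nonneg {n : ℕ} {A : Matrix (Fin n) (Fin n) ℝ} (hM : IsMetzler A)
    (hH : IsHurwitz A) (i j : Fin n) : 0 ≤ (-A)⁻¹ i j := by
  obtain ⟨c, hc0, hdiag, hσ⟩ := ((eventually_gt_atTop 0).and ((eventually_all.2 fun i =>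
    eventually_ge_atTop (-A i i)).and hH.eventually_norm_ofReal_add_lt)).exists
  set X : Matrix (Fin n) (Fin n) ℝ := algebraMap ℝ _ 1 + c⁻¹ • A
  have hX : ∀ i j, 0 ≤ X i j := by
    intro i j
    by_cases hij : i = j
    · subst hij
      have : 0 ≤ c⁻¹ * (A i i + c) := mul_nonneg (inv_nonneg.2 hc0.le) (by linarith [hdiag i])
      simpa [X, mul_add, hc0.ne', add_comm] using this
    · simpa [X, hij] using mul_nonneg (inv_nonneg.2 hc0.le) (hM i j hij)
  have hXσ : ∀ ν ∈ spectrum ℂ (X.map (algebraMap ℝ ℂ)), ‖ν‖ < 1 := by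
    intro ν hν
    obtain ⟨μ, hμ, rfl⟩ :=
      exists_eq_of_mem_spectrum_map_algebraMap_add_smul (inv_ne_zero hc0.ne') hν
    have hν : ((1 : ℝ) : ℂ) + ((c⁻¹ : ℝ) : ℂ) * μ = ((c⁻¹ : ℝ) : ℂ) * ((c : ℂ) + μ) := by
      push_cast
      rw [mul_add, inv_mul_cancel₀ (by exact_mod_cast hc0.ne')]
    rw [hν, norm_mul, Complex.norm_real, Real.norm_of_nonneg (inv_nonneg.2 hc0.le),
      inv_mul_lt_one₀ hc0]
    exact hσ μ hμ
  have hinv : (-A)⁻¹ = c⁻¹ • (1 - X)⁻¹ := by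
    have hnegA : -A = c • (1 - X) := by simp [X, smul_smul, hc0.ne']
    refine inv_eq_left_inv ?_
    rw [hnegA, smul_mul_smul_comm, inv_mul_cancel₀ hc0.ne', one_smul, nonsing_inv_mul _
      ((isUnit_iff_isUnit_det _).mp (isUnit_one_sub_of_forall_norm_lt_one hXσ))]
  rw [hinv]
  exact mul_nonneg (inv_nonneg.2 hc0.le) (inv_one_sub_nonneg hX hXσ i j)

namespace MatIrreducible

variable {m : ℕ} {M : Matrix (Fin m) (Fin m) ℝ}

theorem smul (hirr : MatIrreducible M) {b : ℝ} (hb : b ≠ 0) : MatIrreducible (b • M) := by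
  intro s hs hs'
  obtain ⟨i, hi, j, hj, hij⟩ := hirr s hs hs'
  exact ⟨i, hi, j, hj, by simp [hb, hij]⟩

theorem mul_diagonal (hirr : MatIrreducible M) {d : Fin m → ℝ} (hd : ∀ i, d i ≠ 0) :
    MatIrreducible (M * diagonal d) := by
  intro s hs hs'
  obtain ⟨i, hi, j, hj, hij⟩ := hirr s hs hs'
  exact ⟨i, hi, j, hj, by simp [hd, hij]⟩

/-- If `x k = 0` then `(M x) k ≤ 0` forces `x l = 0` whenever `M k l ≠ 0`: no edge leaves the
zero set of `x`. -/
theorem pos_of_mulVec_le (hirr : MatIrreducible M) (hM : ∀ i j, 0 ≤ M i j)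
    {x : Fin m → ℝ} (hx : 0 ≤ x) (hx0 : x ≠ 0) (hMx : M *ᵥ x ≤ x) (i : Fin m) :
    0 < x i := by
  by_contra! hi
  obtain ⟨k, hk, l, hl, hkl⟩ := hirr {k | x k = 0} ⟨i, le_antisymm hi (hx i)⟩ fun h =>
    hx0 (funext fun k => Set.eq_univ_iff_forall.mp h k)
  have hlk : 0 < M k l * x l := mul_pos ((hM k l).lt_of_ne' hkl) ((hx l).lt_of_ne' hl)
  have hle : M k l * x l ≤ (M *ᵥ x) k :=
    Finset.single_le_sum (fun j _ => mul_nonneg (hM k j) (hx j)) (Finset.mem_univ l)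
  have hk' : (M *ᵥ x) k ≤ 0 := by simpa [show x k = 0 from hk] using hMx k
  linarith

theorem eq_smul_of_mulVec_eq_self (hirr : MatIrreducible M) (hM : ∀ i j, 0 ≤ M i j)
    {v w : Fin m → ℝ} (hv : ∀ i, 0 < v i) (hMv : M *ᵥ v = v) (hw : 0 ≤ w) (hw0 : w ≠ 0)
    (hMw : M *ᵥ w = w) : ∃ c : ℝ, 0 < c ∧ w = c • v := by
  have : Nonempty (Fin m) := ⟨(Function.ne_iff.mp hw0).choose⟩
  obtain ⟨c, i, hle, hi⟩ := exists_smul_le_and_eq_of_pos hv w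
  have hc : 0 < c :=
    pos_of_mul_pos_left (hi ▸ hirr.pos_of_mulVec_le hM hw hw0 hMw.le i) (hv i).le
  refine ⟨c, hc, ?_⟩
  by_contra hne
  have := hirr.pos_of_mulVec_le hM (sub_nonneg.mpr hle) (sub_ne_zero.mpr hne)
    (by rw [mulVec_sub, mulVec_smul, hMw, hMv]) i
  simp [hi] at this

theorem inv_one_sub_mulVec_pos (hirr : MatIrreducible M) (hM : ∀ i j, 0 ≤ M i j)
    (hσ : ∀ μ ∈ spectrum ℂ (M.map (algebraMap ℝ ℂ)), ‖μ‖ < 1) {y : Fin m → ℝ} (hy : 0 ≤ y)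
    (hy0 : y ≠ 0) (i : Fin m) : 0 < ((1 - M)⁻¹ *ᵥ y) i := by
  have hdet := (isUnit_iff_isUnit_det _).mp (isUnit_one_sub_of_forall_norm_lt_one hσ)
  set x := (1 - M)⁻¹ *ᵥ y
  have hx : (1 - M) *ᵥ x = y := by rw [mulVec_mulVec, mul_nonsing_inv _ hdet, one_mulVec]
  refine hirr.pos_of_mulVec_le hM (mulVec_nonneg (inv_one_sub_nonneg hM hσ) hy) ?_ ?_ i
  · intro h
    exact hy0 (by rw [← hx, show x = 0 from h, mulVec_zero])
  · have hMx : M *ᵥ x = x - y := by rw [← hx, sub_mulVec, one_mulVec, sub_sub_cancel]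
    rw [hMx]
    exact sub_le_self x hy

theorem mulVec_eq_self_of_le_mulVec (hirr : MatIrreducible M) (hM : ∀ i j, 0 ≤ M i j)
    (hσ : ∀ μ ∈ spectrum ℂ (M.map (algebraMap ℝ ℂ)), ‖μ‖ ≤ 1) {w : Fin m → ℝ} (hw : 0 ≤ w)
    (hw0 : w ≠ 0) (hle : w ≤ M *ᵥ w) : M *ᵥ w = w := by
  by_contra hne
  have : Nonempty (Fin m) := ⟨(Function.ne_iff.mp hw0).choose⟩
  set X := (2⁻¹ : ℝ) • M
  have hX : ∀ i j, 0 ≤ X i j := fun i j => mul_nonneg (by norm_num) (hM i j)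
  have hXσ := norm_lt_one_of_mem_spectrum_map_smul hσ (b := 2⁻¹) (by norm_num) (by norm_num)
  have hXirr : MatIrreducible X := hirr.smul (by norm_num)
  have hcomm : M * (1 - X)⁻¹ = (1 - X)⁻¹ * M := by
    have hU := isUnit_one_sub_of_forall_norm_lt_one hXσ
    have h1 : Commute M (1 - X) := (Commute.one_right M).sub_right ((Commute.refl M).smul_right _)
    have := ((hU.unit_spec ▸ h1).units_inv_right (u := hU.unit)).eq
    rwa [coe_units_inv, hU.unit_spec] at this
  set v := (1 - X)⁻¹ *ᵥ w
  set z := (1 - X)⁻¹ *ᵥ (M *ᵥ w - w)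
  have hv := hXirr.inv_one_sub_mulVec_pos hX hXσ hw hw0
  have hz := hXirr.inv_one_sub_mulVec_pos hX hXσ (sub_nonneg.mpr hle) (sub_ne_zero.mpr hne)
  have hMv : M *ᵥ v = v + z := by
    rw [mulVec_mulVec, hcomm, ← mulVec_mulVec, ← mulVec_add, add_sub_cancel]
  obtain ⟨ε, i, hεv, hεi⟩ := exists_smul_le_and_eq_of_pos hv z
  have hε : 0 < ε := pos_of_mul_pos_left (hεi ▸ hz i) (hv i).le
  have hv0 := eq_zero_of_smul_le_mulVec hM hσ (t := 1 + ε) (by linarith) (fun i => (hv i).le)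
    (by rw [hMv, add_smul, one_smul]; exact add_le_add le_rfl hεv)
  exact (hv i).ne' (congrFun hv0 i)

theorem exists_pos_mulVec_eq_self (hirr : MatIrreducible M) (hM : ∀ i j, 0 ≤ M i j)
    (hσ : ∀ μ ∈ spectrum ℂ (M.map (algebraMap ℝ ℂ)), ‖μ‖ ≤ 1) {μ : ℂ}
    (hμ : μ ∈ spectrum ℂ (M.map (algebraMap ℝ ℂ))) (hμ1 : ‖μ‖ = 1) :
    ∃ v : Fin m → ℝ, (∀ i, 0 < v i) ∧ M *ᵥ v = v := by
  obtain ⟨z, hz⟩ := (Module.End.hasEigenvalue_iff_mem_spectrum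
    (f := (M.map (algebraMap ℝ ℂ)).toLin') (μ := μ)).mpr (by rwa [spectrum_toLin'])
    |>.exists_hasEigenvector
  have hMz : M.map (algebraMap ℝ ℂ) *ᵥ z = μ • z := by simpa using hz.apply_eq_smul
  have hw : 0 ≤ fun j => ‖z j‖ := fun j => norm_nonneg _
  have hw0 : (fun j => ‖z j‖) ≠ 0 := fun h =>
    hz.2 (funext fun j => norm_eq_zero.mp (congrFun h j))
  have hle : (fun j => ‖z j‖) ≤ M *ᵥ fun j => ‖z j‖ := fun i => by
    have := norm_map_mulVec_le hM z i
    rwa [hMz, Pi.smul_apply, smul_eq_mul, norm_mul, hμ1, one_mul] at this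
  have hfix := hirr.mulVec_eq_self_of_le_mulVec hM hσ hw hw0 hle
  exact ⟨_, hirr.pos_of_mulVec_le hM hw hw0 hfix.le, hfix⟩

end MatIrreducible

theorem specRad_eq_sSup_image {n : ℕ} (M : Matrix (Fin n) (Fin n) ℝ) :
    specRad M = sSup ((‖·‖) '' spectrum ℂ (M.map (algebraMap ℝ ℂ))) := by
  simp only [specRad, Set.image, eq_comm]

theorem norm_le_specRad {n : ℕ} {M : Matrix (Fin n) (Fin n) ℝ} {μ : ℂ}
    (hμ : μ ∈ spectrum ℂ (M.map (algebraMap ℝ ℂ))) : ‖μ‖ ≤ specRad M := by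
  rw [specRad_eq_sSup_image]
  exact le_csSup ((finite_spectrum _).image _).bddAbove (Set.mem_image_of_mem _ hμ)

theorem exists_norm_eq_specRad {n : ℕ} {M : Matrix (Fin n) (Fin n) ℝ} (h : specRad M ≠ 0) :
    ∃ μ ∈ spectrum ℂ (M.map (algebraMap ℝ ℂ)), ‖μ‖ = specRad M := by
  rw [specRad_eq_sSup_image] at h ⊢
  have hne : ((‖·‖) '' spectrum ℂ (M.map (algebraMap ℝ ℂ))).Nonempty :=
    Set.nonempty_iff_ne_empty.mpr fun h' => h (by rw [h', Real.sSup_empty])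
  exact hne.csSup_mem ((finite_spectrum _).image _)

/-- At threshold (`ρ(G̃ Diag(S)) = 1`, `G̃ := B(-A)⁻¹P` irreducible, `S ≫ 0`), the nonzero
nonnegative solutions of `0 = A I + P Diag(S) B I` form a one-dimensional positive ray
generated by `(-A)⁻¹ P Diag(S) v`, with `v ≫ 0` the Perron eigenvector of `G̃ Diag(S)`. -/
theorem threshold_solutions_form_ray {n m : ℕ}
    (A : Matrix (Fin n) (Fin n) ℝ) (hM : IsMetzler A) (hH : IsHurwitz A)
    (P : Matrix (Fin n) (Fin m) ℝ) (B : Matrix (Fin m) (Fin n) ℝ)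
    (hP : ∀ i j, 0 ≤ P i j) (hB : ∀ i j, 0 ≤ B i j)
    (hirr : MatIrreducible (B * (-A)⁻¹ * P))
    (S : Fin m → ℝ) (hS : ∀ i, 0 < S i)
    (hρ : specRad (B * (-A)⁻¹ * P * Matrix.diagonal S) = 1) :
    ∃ v : Fin m → ℝ, (∀ i, 0 < v i) ∧
      (B * (-A)⁻¹ * P * Matrix.diagonal S).mulVec v = v ∧
      (∀ v' : Fin m → ℝ, (∀ i, 0 ≤ v' i) → v' ≠ 0 →
        (B * (-A)⁻¹ * P * Matrix.diagonal S).mulVec v' = v' → ∃ c : ℝ, 0 < c ∧ v' = c • v) ∧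
      ∀ I : Fin n → ℝ, (∀ i, 0 ≤ I i) → I ≠ 0 →
        0 = A.mulVec I + (P * Matrix.diagonal S * B).mulVec I →
        ∃ k : ℝ, 0 < k ∧ I = k • (-A)⁻¹.mulVec (P.mulVec ((Matrix.diagonal S).mulVec v)) := by
  have hGD : ∀ i j, 0 ≤ (B * (-A)⁻¹ * P * diagonal S) i j := fun i j => by
    rw [mul_diagonal]
    exact mul_nonneg
      (mul_apply_nonneg (mul_apply_nonneg hB (hM.inv_neg_nonneg hH)) hP i j) (hS j).le
  have hGDirr := hirr.mul_diagonal fun i => (hS i).ne'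
  obtain ⟨μ, hμ, hμ1⟩ := exists_norm_eq_specRad (hρ ▸ one_ne_zero)
  obtain ⟨v, hv, hGv⟩ := hGDirr.exists_pos_mulVec_eq_self hGD
    (fun μ hμ => hρ ▸ norm_le_specRad hμ) hμ (hμ1.trans hρ)
  have hray := fun w => hGDirr.eq_smul_of_mulVec_eq_self hGD hv hGv (w := w)
  refine ⟨v, hv, hGv, hray, fun I hI hI0 hsol => ?_⟩
  have hIeq := eq_inv_neg_mulVec_of_zero_eq_add hH.isUnit_neg hsol
  simp only [← mulVec_mulVec] at hIeq
  have hGu : (B * (-A)⁻¹ * P * diagonal S) *ᵥ (B *ᵥ I) = B *ᵥ I := by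
    conv_rhs => rw [hIeq]
    simp only [← mulVec_mulVec]
  have hu0 : B *ᵥ I ≠ 0 := fun h => hI0 (by rw [hIeq, h]; simp)
  obtain ⟨k, hk, hku⟩ := hray _ (mulVec_nonneg hB hI) hu0 hGu
  exact ⟨k, hk, by rw [hIeq, hku, mulVec_smul, mulVec_smul, mulVec_smul]⟩
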